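/- arXiv:2505.11918 — 4 statements merged into one kernel-verified Lean document; each statement's English description precedes it below -/
import Mathlib

section
/- For any vectors u, v in R^d, ‖softmax(u) − softmax(v)‖_∞ ≤ exp(2‖u − v‖_∞) − 1, where softmax(u)_i = exp(u_i)/Σ_j exp(u_j). -/
/-!
If `|u j - v j| ≤ M` for every `j`, then `exp (u i) ≤ e^M exp (v i)` and
`∑ exp (v j) ≤ e^M ∑ exp (u j)`, so every coordinate of `softmax u` is at most `e^{2M}` times
the same coordinate of `softmax v`, and symmetrically. Two numbers at most `1`, each within a
factor `c ≥ 1` of the other differ by at most `c - 1`.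
-/

open Real Finset

noncomputable def softmax {ι : Type*} [Fintype ι] (u : ι → ℝ) : ι → ℝ :=
  fun i => exp (u i) / ∑ j, exp (u j)

section Softmax

variable {ι : Type*} [Fintype ι]

lemma sum_exp_pos (u : ι → ℝ) (i : ι) : 0 < ∑ j, exp (u j) :=
  sum_pos (fun j _ => exp_pos (u j)) ⟨i, mem_univ i⟩

lemma softmax_le_one (u : ι → ℝ) (i : ι) : softmax u i ≤ 1 :=
  (div_le_one (sum_exp_pos u i)).2 <|
    single_le_sum (f := fun j => exp (u j)) (fun _ _ => (exp_pos _).le) (mem_univ i)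

lemma sum_exp_le_exp_mul_sum_exp {u v : ι → ℝ} {M : ℝ} (h : ∀ j, u j ≤ v j + M) :
    ∑ j, exp (u j) ≤ exp M * ∑ j, exp (v j) := by
  rw [mul_sum]
  gcongr with j
  rw [← exp_add, add_comm M]
  exact exp_le_exp.2 (h j)

lemma softmax_le_exp_mul_softmax {u v : ι → ℝ} {M : ℝ} (h : ∀ j, |u j - v j| ≤ M) (i : ι) :
    softmax u i ≤ exp (2 * M) * softmax v i := by
  have hu : ∀ j, u j ≤ v j + M := fun j => by linarith [(abs_le.1 (h j)).2]
  have hv : ∀ j, v j ≤ u j + M := fun j => by linarith [(abs_le.1 (h j)).1]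
  have hSu := sum_exp_pos u i
  have hSv := sum_exp_pos v i
  calc softmax u i = exp (u i) / ∑ j, exp (u j) := rfl
    _ ≤ exp M * exp (v i) / (exp (-M) * ∑ j, exp (v j)) := by
        gcongr
        · rw [← exp_add, add_comm M]; exact exp_le_exp.2 (hu i)
        · rw [exp_neg, inv_mul_le_iff₀ (exp_pos M)]
          exact sum_exp_le_exp_mul_sum_exp hv
    _ = exp (2 * M) * softmax v i := by
        rw [softmax, exp_neg, two_mul, exp_add]
        field_simp

end Softmax

lemma abs_sub_le_sub_one_of_le_mul {a b c : ℝ} (hab : a ≤ c * b) (hba : b ≤ c * a)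
    (ha : a ≤ 1) (hb : b ≤ 1) (hc : 1 ≤ c) : |a - b| ≤ c - 1 :=
  abs_sub_le_iff.2 ⟨by nlinarith, by nlinarith⟩

/-- `‖softmax u − softmax v‖_∞ ≤ exp (2 ‖u − v‖_∞) − 1`, where `Fin d → ℝ`
carries the sup norm and `softmax u i = exp (u i) / ∑ j, exp (u j)`. -/
theorem softmax_perturbation {d : ℕ} (u v : Fin d → ℝ) :
    ‖(fun i => Real.exp (u i) / ∑ j, Real.exp (u j)) -
      (fun i => Real.exp (v i) / ∑ j, Real.exp (v j))‖ ≤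
      Real.exp (2 * ‖u - v‖) - 1 := by
  have hc : 1 ≤ exp (2 * ‖u - v‖) := one_le_exp (by positivity)
  have huv : ∀ j, |u j - v j| ≤ ‖u - v‖ := fun j => by
    simpa using norm_le_pi_norm (u - v) j
  have hvu : ∀ j, |v j - u j| ≤ ‖u - v‖ := fun j => abs_sub_comm (v j) (u j) ▸ huv j
  exact (pi_norm_le_iff_of_nonneg (sub_nonneg.2 hc)).2 fun i =>
    abs_sub_le_sub_one_of_le_mul (softmax_le_exp_mul_softmax huv i)
      (softmax_le_exp_mul_softmax hvu i) (softmax_le_one u i) (softmax_le_one v i) hc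
end

section
/- For any A > 1 and δ > 0, there exists a one-hidden-layer ReLU network log_δ(x) = Σ_{j=1}^M a_j·ReLU(w_j x + b_j) with M = ⌈2 log(A)/δ⌉ + 1 neurons, weights satisfying |a_j| ≤ 2A, |w_j| ≤ 1, |b_j| ≤ A, such that log_δ is non-decreasing on [1/A, A] and sup_{x ∈ [1/A, A]} |log(x) − log_δ(x)| ≤ δ. -/
/-!
The network is the piecewise linear interpolant of `log` at the geometric knots
`X k = exp (k h - log A)`, `k = 0, …, N`, with `h = 2 log A / N ≤ δ`, shifted by the constant
neuron `-ReLU (log A)`. Between consecutive knots both `log` and the interpolant stay in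
`[k h - log A, (k + 1) h - log A]`, so they differ by at most `h`. The slopes `h / (X (k+1) - X k)`
are positive and, as `exp h - 1 ≥ h`, at most `1 / X k ≤ A`.
-/

open Finset Set Real

section Segments

variable {α β : Type*} [LinearOrder α] [Preorder β]

theorem exists_mem_Icc_succ_of_mem_Icc (X : ℕ → α) {x : α} :
    ∀ n, x ∈ Icc (X 0) (X n) → 0 < n → ∃ m < n, x ∈ Icc (X m) (X (m + 1))
  | 0, _, hn => absurd hn (lt_irrefl 0)
  | n + 1, hx, _ => by
    by_cases hxn : X n ≤ x
    · exact ⟨n, n.lt_succ_self, hxn, hx.2⟩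
    · obtain ⟨m, hmn, hm⟩ := exists_mem_Icc_succ_of_mem_Icc X n ⟨hx.1, (not_le.1 hxn).le⟩
        (Nat.pos_of_ne_zero fun hn => hxn (hn ▸ hx.1))
      exact ⟨m, hmn.trans n.lt_succ_self, hm⟩

theorem monotoneOn_Icc_of_monotoneOn_Icc_succ {X : ℕ → α} (hX : Monotone X) {f : α → β} :
    ∀ n, (∀ m < n, MonotoneOn f (Icc (X m) (X (m + 1)))) → MonotoneOn f (Icc (X 0) (X n))
  | 0, _ => (subsingleton_Icc_of_ge le_rfl).monotoneOn f
  | n + 1, hf => by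
    rw [← Icc_union_Icc_eq_Icc (hX n.zero_le) (hX n.le_succ)]
    exact (monotoneOn_Icc_of_monotoneOn_Icc_succ hX n fun m hm =>
      hf m (hm.trans n.lt_succ_self)).union_right (hf n n.lt_succ_self)
        (isGreatest_Icc (hX n.zero_le)) (isLeast_Icc (hX n.le_succ))

end Segments

section HingeSum

variable {𝕜 : Type*} [CommRing 𝕜]

theorem sum_range_succ_sub_mul_sub (X s : ℕ → 𝕜) (x : 𝕜) (m : ℕ) :
    ∑ k ∈ range (m + 1), (s (k + 1) - s k) * (x - X k) =
      ∑ k ∈ range m, s (k + 1) * (X (k + 1) - X k) + s (m + 1) * (x - X m) -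
        s 0 * (x - X 0) := by
  induction m with
  | zero => rw [sum_range_one, sum_range_zero]; ring
  | succ m ih => rw [sum_range_succ, ih, sum_range_succ]; ring

variable [LinearOrder 𝕜]

/-- `s k` is the slope on `[X (k - 1), X k]`, so `s 0` is the slope to the left of `X 0`. -/
def hingeSum (X s : ℕ → 𝕜) (n : ℕ) (x : 𝕜) : 𝕜 :=
  ∑ k ∈ range n, (s (k + 1) - s k) * max (x - X k) 0

variable [IsStrictOrderedRing 𝕜] {X s : ℕ → 𝕜} {h x : 𝕜} {m n : ℕ}

theorem hingeSum_eq_of_mem_Icc (hX : Monotone X) (hs0 : s 0 = 0) (hmn : m < n)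
    (hx : x ∈ Icc (X m) (X (m + 1))) :
    hingeSum X s n x =
      ∑ k ∈ range m, s (k + 1) * (X (k + 1) - X k) + s (m + 1) * (x - X m) := by
  have h_right : ∑ k ∈ Ico (m + 1) n, (s (k + 1) - s k) * max (x - X k) 0 = 0 :=
    sum_eq_zero fun k hk => by
      rw [max_eq_right (sub_nonpos.2 (hx.2.trans (hX (mem_Ico.1 hk).1))), mul_zero]
  have h_left : ∑ k ∈ range (m + 1), (s (k + 1) - s k) * max (x - X k) 0 =
      ∑ k ∈ range (m + 1), (s (k + 1) - s k) * (x - X k) :=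
    sum_congr rfl fun k hk => by
      rw [max_eq_left (sub_nonneg.2 ((hX (Nat.lt_succ_iff.1 (mem_range.1 hk))).trans hx.1))]
  rw [hingeSum, ← sum_range_add_sum_Ico _ hmn, h_right, add_zero, h_left,
    sum_range_succ_sub_mul_sub, hs0, zero_mul, sub_zero]

theorem hingeSum_mem_Icc (hX : Monotone X) (hs0 : s 0 = 0) (hs : ∀ k, 0 ≤ s (k + 1))
    (hstep : ∀ k, s (k + 1) * (X (k + 1) - X k) = h) (hmn : m < n)
    (hx : x ∈ Icc (X m) (X (m + 1))) :
    hingeSum X s n x ∈ Icc (m * h) ((m + 1) * h) := by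
  rw [hingeSum_eq_of_mem_Icc hX hs0 hmn hx]
  simp only [hstep, sum_const, card_range, nsmul_eq_mul]
  have h_last : s (m + 1) * (x - X m) ≤ h :=
    hstep m ▸ mul_le_mul_of_nonneg_left (sub_le_sub_right hx.2 _) (hs m)
  exact ⟨le_add_of_nonneg_right (mul_nonneg (hs m) (sub_nonneg.2 hx.1)), by linarith⟩

theorem monotoneOn_hingeSum (hX : Monotone X) (hs0 : s 0 = 0) (hs : ∀ k, 0 ≤ s (k + 1)) :
    MonotoneOn (hingeSum X s n) (Icc (X 0) (X n)) :=
  monotoneOn_Icc_of_monotoneOn_Icc_succ hX n fun m hmn x hx y hy hxy => by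
    rw [hingeSum_eq_of_mem_Icc hX hs0 hmn hx, hingeSum_eq_of_mem_Icc hX hs0 hmn hy]
    gcongr
    exact hs m

end HingeSum

section ReluNet

variable {𝕜 : Type*} [CommRing 𝕜] [LinearOrder 𝕜] {M : ℕ}

def reluNet (a w b : Fin M → 𝕜) (x : 𝕜) : 𝕜 := ∑ j, a j * max (w j * x + b j) 0

theorem reluNet_snoc (a w b : Fin M → 𝕜) {c : 𝕜} (hc : 0 ≤ c) (x : 𝕜) :
    reluNet (Fin.snoc a (-1) : Fin (M + 1) → 𝕜) (Fin.snoc w 0) (Fin.snoc b c) x =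
      reluNet a w b x - c := by
  simp [reluNet, Fin.sum_univ_castSucc, max_eq_left hc, sub_eq_add_neg]

theorem hingeSum_eq_reluNet (X s : ℕ → 𝕜) (x : 𝕜) :
    hingeSum X s M x = reluNet (fun i : Fin M => s (i + 1) - s i) 1 (fun i => -X i) x := by
  simp [hingeSum, reluNet, ← Fin.sum_univ_eq_sum_range, sub_eq_add_neg]

end ReluNet

section LogInterpolation

noncomputable def logKnot (h L : ℝ) (k : ℕ) : ℝ := exp (k * h - L)

noncomputable def logSlope (h L : ℝ) : ℕ → ℝ
  | 0 => 0
  | k + 1 => h / (logKnot h L (k + 1) - logKnot h L k)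

variable {h L x : ℝ}

theorem logKnot_pos (h L : ℝ) (k : ℕ) : 0 < logKnot h L k := exp_pos _

theorem logKnot_succ (h L : ℝ) (k : ℕ) : logKnot h L (k + 1) = logKnot h L k * exp h := by
  rw [logKnot, logKnot, ← exp_add]; push_cast; ring_nf

theorem log_logKnot (h L : ℝ) (k : ℕ) : log (logKnot h L k) = k * h - L := log_exp _

theorem logKnot_monotone (hh : 0 ≤ h) : Monotone (logKnot h L) :=
  monotone_nat_of_le_succ fun k => by
    rw [logKnot_succ]; exact le_mul_of_one_le_right (logKnot_pos h L k).le (one_le_exp hh)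

theorem logKnot_mul_le_sub (h L : ℝ) (k : ℕ) :
    logKnot h L k * h ≤ logKnot h L (k + 1) - logKnot h L k := by
  have := mul_le_mul_of_nonneg_left (add_one_le_exp h) (logKnot_pos h L k).le
  rw [logKnot_succ]
  linarith

theorem logKnot_lt_succ (hh : 0 < h) (k : ℕ) : logKnot h L k < logKnot h L (k + 1) :=
  sub_pos.1 ((mul_pos (logKnot_pos h L k) hh).trans_le (logKnot_mul_le_sub h L k))

theorem logSlope_succ_mul (hh : 0 < h) (k : ℕ) :
    logSlope h L (k + 1) * (logKnot h L (k + 1) - logKnot h L k) = h :=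
  div_mul_cancel₀ _ (sub_pos.2 (logKnot_lt_succ hh k)).ne'

theorem logSlope_nonneg (hh : 0 < h) : ∀ k, 0 ≤ logSlope h L k
  | 0 => le_rfl
  | k + 1 => (div_pos hh (sub_pos.2 (logKnot_lt_succ hh k))).le

theorem logSlope_le (hh : 0 < h) : ∀ k, logSlope h L k ≤ exp L
  | 0 => (exp_pos L).le
  | k + 1 => by
    have h_le_inv : logSlope h L (k + 1) ≤ (logKnot h L k)⁻¹ := by
      rw [logSlope, div_le_iff₀ (sub_pos.2 (logKnot_lt_succ hh k)), inv_mul_eq_div,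
        le_div_iff₀' (logKnot_pos h L k)]
      exact logKnot_mul_le_sub h L k
    calc logSlope h L (k + 1) ≤ (logKnot h L k)⁻¹ := h_le_inv
      _ = exp (L - k * h) := by rw [logKnot, ← exp_neg, neg_sub]
      _ ≤ exp L := exp_le_exp.2 (sub_le_self _ (by positivity))

theorem abs_log_sub_hingeSum_le (hh : 0 < h) {n : ℕ} (hn : 0 < n)
    (hx : x ∈ Icc (logKnot h L 0) (logKnot h L n)) :
    |log x - (hingeSum (logKnot h L) (logSlope h L) n x - L)| ≤ h := by
  obtain ⟨m, hmn, hm⟩ := exists_mem_Icc_succ_of_mem_Icc _ n hx hn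
  have hx0 : 0 < x := (logKnot_pos h L m).trans_le hm.1
  have h_log : log x ∈ Icc (m * h - L) ((m + 1) * h - L) := by
    have h1 : log (logKnot h L m) ≤ log x := log_le_log (logKnot_pos h L m) hm.1
    have h2 := log_le_log hx0 hm.2
    rw [log_logKnot] at h1 h2
    push_cast at h2
    exact ⟨h1, h2⟩
  have h_net := hingeSum_mem_Icc (logKnot_monotone hh.le) rfl
    (fun k => logSlope_nonneg hh _) (logSlope_succ_mul hh) hmn hm
  have h_net' :
      hingeSum (logKnot h L) (logSlope h L) n x - L ∈ Icc (m * h - L) ((m + 1) * h - L) :=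
    ⟨by linarith [h_net.1], by linarith [h_net.2]⟩
  simpa [← Real.dist_eq, add_mul] using Real.dist_le_of_mem_Icc h_log h_net'

theorem exists_reluNet_approx_log (hL : 0 < L) {N : ℕ} (hN : 0 < N) :
    ∃ a w b : Fin (N + 1) → ℝ,
      (∀ j, |a j| ≤ exp L) ∧ (∀ j, |w j| ≤ 1) ∧ (∀ j, |b j| ≤ exp L) ∧
      MonotoneOn (reluNet a w b) (Icc (exp (-L)) (exp L)) ∧
      ∀ x ∈ Icc (exp (-L)) (exp L), |log x - reluNet a w b x| ≤ 2 * L / N := by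
  set h := 2 * L / N
  have hh : 0 < h := by positivity
  have hX0 : logKnot h L 0 = exp (-L) := by simp [logKnot]
  have hXN : logKnot h L N = exp L := by
    rw [logKnot, mul_div_cancel₀ _ (by positivity)]
    ring_nf
  set a : Fin (N + 1) → ℝ :=
    Fin.snoc (fun i : Fin N => logSlope h L (i + 1) - logSlope h L i) (-1)
  set w : Fin (N + 1) → ℝ := Fin.snoc 1 0
  set b : Fin (N + 1) → ℝ := Fin.snoc (fun i : Fin N => -logKnot h L i) L
  have h_net : reluNet a w b = fun x => hingeSum (logKnot h L) (logSlope h L) N x - L :=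
    funext fun x => by rw [reluNet_snoc _ _ _ hL.le, hingeSum_eq_reluNet]
  refine ⟨a, w, b, fun j => ?_, fun j => ?_, fun j => ?_, ?_, fun x hx => ?_⟩
  · induction j using Fin.lastCases with
    | last => simpa [a] using one_le_exp hL.le
    | cast i =>
      simp only [a, Fin.snoc_castSucc]
      exact abs_sub_le_of_nonneg_of_le (logSlope_nonneg hh _) (logSlope_le hh _)
        (logSlope_nonneg hh _) (logSlope_le hh _)
  · induction j using Fin.lastCases <;> simp [w]
  · induction j using Fin.lastCases with
    | last => simpa [b, abs_of_pos hL] using (lt_add_one L).le.trans (add_one_le_exp L)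
    | cast i =>
      simp only [b, Fin.snoc_castSucc, abs_neg, abs_of_pos (logKnot_pos h L i)]
      rw [← hXN]
      exact logKnot_monotone hh.le i.is_lt.le
  · rw [h_net, ← hX0, ← hXN]
    exact (monotoneOn_hingeSum (logKnot_monotone hh.le) rfl
      fun k => logSlope_nonneg hh _).add_const (-L)
  · rw [← hX0, ← hXN] at hx
    rw [h_net]
    exact abs_log_sub_hingeSum_le hh hN hx

end LogInterpolation

/-- ReLU-network approximation of the logarithm on `[1/A, A]` with
`M = ⌈2 log A / δ⌉ + 1` neurons. -/
theorem relu_approx_log (A δ : ℝ) (hA : 1 < A) (hδ : 0 < δ) :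
    ∃ a w b : Fin (⌈2 * Real.log A / δ⌉₊ + 1) → ℝ,
      (∀ j, |a j| ≤ 2 * A) ∧ (∀ j, |w j| ≤ 1) ∧ (∀ j, |b j| ≤ A) ∧
      MonotoneOn (fun x => ∑ j, a j * max (w j * x + b j) 0) (Set.Icc (1 / A) A) ∧
      ∀ x ∈ Set.Icc (1 / A) A,
        |Real.log x - ∑ j, a j * max (w j * x + b j) 0| ≤ δ := by
  have hA0 : 0 < A := zero_lt_one.trans hA
  have hL : 0 < log A := log_pos hA
  have hN : 0 < ⌈2 * log A / δ⌉₊ := Nat.ceil_pos.2 (by positivity)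
  obtain ⟨a, w, b, ha, hw, hb, h_mono, h_err⟩ := exists_reluNet_approx_log hL hN
  rw [exp_log hA0] at ha hb
  rw [exp_neg, exp_log hA0, inv_eq_one_div] at h_mono h_err
  refine ⟨a, w, b, fun j => (ha j).trans (by linarith), hw, hb, h_mono,
    fun x hx => (h_err x hx).trans ?_⟩
  rw [div_le_iff₀ (by positivity)]
  exact ((div_le_iff₀ hδ).1 (Nat.le_ceil _)).trans_eq (mul_comm _ _)
end

section
/- For any A > 0 and δ > 0, there exists a one-hidden-layer ReLU network φ_δ(x) = Σ_{j=1}^M a_j·ReLU(w_j x + b_j) with M = ⌈2A²/δ⌉ + 1 neurons, weights satisfying |a_j| ≤ 2A, |w_j| ≤ 1, |b_j| ≤ A, such that sup_{x ∈ [−A, A]} |φ_δ(x) − x²| ≤ δ. -/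
/-!
With knots `(k + 1/2) h`, the sum `∑_{k<n} 2h·ReLU(y - (k + 1/2) h)` coincides on
`[(j - 1/2) h, (j + 1/2) h]` with the tangent line `2jh·y - (jh)²` of `y²` at the grid point
`jh`, so it approximates `y²` on `[0, nh]` within `(y - jh)² ≤ h²/4`. Pairs of neurons with
inner weights `±1` turn `y` into `|x|`, and `h = A / n` with `2n ≤ M` neurons makes
`h²/4 ≤ δ`.
-/

open Finset

lemma max_sub_zero_add_max_neg_sub_zero {α : Type*} [AddCommGroup α] [LinearOrder α]
    [IsOrderedAddMonoid α] (x m : α) (hm : 0 ≤ m) :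
    max (x - m) 0 + max (-x - m) 0 = max (|x| - m) 0 := by
  rcases le_total 0 x with hx | hx
  · rw [abs_of_nonneg hx, max_eq_right (sub_nonpos.mpr ((neg_nonpos.mpr hx).trans hm)), add_zero]
  · rw [abs_of_nonpos hx, max_eq_right (sub_nonpos.mpr (hx.trans hm)), zero_add]

noncomputable def reluKnotSum (h : ℝ) (n : ℕ) (y : ℝ) : ℝ :=
  ∑ k ∈ range n, 2 * h * max (y - ((k : ℝ) + 1 / 2) * h) 0

lemma sum_range_two_mul_sub_knot (h y : ℝ) (j : ℕ) :
    ∑ k ∈ range j, 2 * h * (y - ((k : ℝ) + 1 / 2) * h) = 2 * h * j * y - (h * j) ^ 2 := by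
  induction j with
  | zero => simp
  | succ j ih => rw [sum_range_succ, ih]; push_cast; ring

lemma reluKnotSum_eq_of_mem_Icc {h y : ℝ} {j n : ℕ} (hh : 0 < h) (hjn : j ≤ n)
    (hy : y ∈ Set.Icc (((j : ℝ) - 1 / 2) * h) (((j : ℝ) + 1 / 2) * h)) :
    reluKnotSum h n y = 2 * h * j * y - (h * j) ^ 2 := by
  have inactive : ∀ k ∈ range n, k ∉ range j →
      2 * h * max (y - ((k : ℝ) + 1 / 2) * h) 0 = 0 := by
    intro k _ hk
    have hjk : (j : ℝ) ≤ k := by exact_mod_cast not_lt.mp (mem_range.not.mp hk)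
    rw [max_eq_right (by nlinarith [hy.2]), mul_zero]
  have active : ∀ k ∈ range j,
      2 * h * max (y - ((k : ℝ) + 1 / 2) * h) 0 = 2 * h * (y - ((k : ℝ) + 1 / 2) * h) := by
    intro k hk
    have hkj : (k : ℝ) + 1 ≤ j := by exact_mod_cast mem_range.mp hk
    rw [max_eq_left (by nlinarith [hy.1])]
  rw [reluKnotSum, ← sum_subset (range_subset_range.mpr hjn) inactive, sum_congr rfl active,
    sum_range_two_mul_sub_knot]

lemma abs_reluKnotSum_sub_sq_le {h y : ℝ} {n : ℕ} (hh : 0 < h) (hy₀ : 0 ≤ y)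
    (hyn : y ≤ n * h) : |reluKnotSum h n y - y ^ 2| ≤ h ^ 2 / 4 := by
  set j := ⌊y / h + 1 / 2⌋₊
  have hj_le : (j : ℝ) ≤ y / h + 1 / 2 := Nat.floor_le (by positivity)
  have hj_gt : y / h + 1 / 2 < j + 1 := Nat.lt_floor_add_one _
  have hyh : y / h * h = y := div_mul_cancel₀ y hh.ne'
  have hjn : j ≤ n := by
    have : y / h ≤ n := (div_le_iff₀ hh).mpr hyn
    exact Nat.lt_succ_iff.mp (by exact_mod_cast (by linarith : (j : ℝ) < n + 1))
  have hdist : |y - h * j| ≤ h / 2 := by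
    rw [abs_le]; constructor <;> nlinarith
  rw [reluKnotSum_eq_of_mem_Icc hh hjn ⟨by nlinarith, by nlinarith⟩,
    show 2 * h * j * y - (h * j) ^ 2 - y ^ 2 = -(y - h * j) ^ 2 by ring, abs_neg,
    abs_of_nonneg (sq_nonneg _)]
  calc (y - h * j) ^ 2 = |y - h * j| ^ 2 := (sq_abs _).symm
    _ ≤ (h / 2) ^ 2 := pow_le_pow_left₀ (abs_nonneg _) hdist 2
    _ = h ^ 2 / 4 := by ring

noncomputable section SquareNetwork

variable (n : ℕ) (h : ℝ)

/-- Neurons `k` and `n + k` (`k < n`) share the knot `(k + 1/2) h`; neurons from `2n` on are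
padding. -/
def sqOuterWeight (i : ℕ) : ℝ := if i < 2 * n then 2 * h else 0

def sqInnerWeight (i : ℕ) : ℝ := if i < n then 1 else -1

def sqBias (i : ℕ) : ℝ := -((((i % n : ℕ) : ℝ) + 1 / 2) * h)

lemma sum_range_sqNetwork_eq {M : ℕ} (hM : 2 * n ≤ M) (hh : 0 ≤ h) (x : ℝ) :
    ∑ i ∈ range M, sqOuterWeight n h i * max (sqInnerWeight n i * x + sqBias n h i) 0
      = reluKnotSum h n |x| := by
  have padding : ∀ i ∈ range M, i ∉ range (n + n) →
      sqOuterWeight n h i * max (sqInnerWeight n i * x + sqBias n h i) 0 = 0 := by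
    intro i _ hi
    rw [sqOuterWeight, if_neg (by rw [mem_range] at hi; omega), zero_mul]
  rw [← sum_subset (range_subset_range.mpr (by omega)) padding, sum_range_add, reluKnotSum,
    ← sum_add_distrib]
  refine sum_congr rfl fun k hk => ?_
  have hk : k < n := mem_range.mp hk
  simp only [sqOuterWeight, sqInnerWeight, sqBias, if_pos (by omega : k < 2 * n),
    if_pos hk, if_pos (by omega : n + k < 2 * n), if_neg (by omega : ¬n + k < n),
    Nat.mod_eq_of_lt hk, Nat.add_mod_left]
  rw [← mul_add, ← max_sub_zero_add_max_neg_sub_zero x _ (by positivity)]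
  ring_nf

lemma abs_sqOuterWeight_le (hn : 0 < n) (hh : 0 ≤ h) (i : ℕ) :
    |sqOuterWeight n h i| ≤ 2 * (n * h) := by
  have hn' : (1 : ℝ) ≤ n := by exact_mod_cast hn
  unfold sqOuterWeight
  split_ifs
  · rw [abs_of_nonneg (by positivity)]; nlinarith
  · rw [abs_zero]; positivity

lemma abs_sqInnerWeight_le (i : ℕ) : |sqInnerWeight n i| ≤ 1 := by
  unfold sqInnerWeight
  split_ifs <;> simp

lemma abs_sqBias_le (hn : 0 < n) (hh : 0 ≤ h) (i : ℕ) : |sqBias n h i| ≤ n * h := by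
  have hi : ((i % n : ℕ) : ℝ) + 1 ≤ n := by exact_mod_cast Nat.mod_lt i hn
  rw [sqBias, abs_neg, abs_of_nonneg (by positivity)]
  nlinarith

end SquareNetwork

lemma le_two_mul_half_ceil_add_one (t : ℝ) : t ≤ 2 * (((⌈t⌉₊ + 1) / 2 : ℕ) : ℝ) := by
  have : ⌈t⌉₊ ≤ 2 * ((⌈t⌉₊ + 1) / 2) := by omega
  exact (Nat.le_ceil t).trans (by exact_mod_cast this)

/-- ReLU-network approximation of the square function on `[-A, A]` with
`M = ⌈2 A² / δ⌉ + 1` neurons. -/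
theorem relu_approx_sq (A δ : ℝ) (hA : 0 < A) (hδ : 0 < δ) :
    ∃ a w b : Fin (⌈2 * A ^ 2 / δ⌉₊ + 1) → ℝ,
      (∀ j, |a j| ≤ 2 * A) ∧ (∀ j, |w j| ≤ 1) ∧ (∀ j, |b j| ≤ A) ∧
      ∀ x ∈ Set.Icc (-A) A,
        |(∑ j, a j * max (w j * x + b j) 0) - x ^ 2| ≤ δ := by
  set n := (⌈2 * A ^ 2 / δ⌉₊ + 1) / 2
  have hn : 0 < n := by
    have : 0 < ⌈2 * A ^ 2 / δ⌉₊ := Nat.ceil_pos.mpr (by positivity)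
    omega
  set h := A / n
  have hh : 0 < h := by positivity
  have hnh : n * h = A := mul_div_cancel₀ A (by positivity)
  have hδh : h ^ 2 ≤ δ := by
    have hceil : 2 * A ^ 2 / δ ≤ 2 * n := le_two_mul_half_ceil_add_one _
    rw [div_le_iff₀ hδ, ← hnh] at hceil
    have hn' : (1 : ℝ) ≤ n := by exact_mod_cast hn
    have hnh_sq : n * h ^ 2 ≤ δ :=
      le_of_mul_le_mul_left (by nlinarith) (by positivity : 0 < (n : ℝ))
    nlinarith
  refine ⟨fun j => sqOuterWeight n h j, fun j => sqInnerWeight n j, fun j => sqBias n h j,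
    fun j => (abs_sqOuterWeight_le n h hn hh.le j).trans_eq (by rw [hnh]),
    fun j => abs_sqInnerWeight_le n j, fun j => (abs_sqBias_le n h hn hh.le j).trans_eq hnh,
    fun x hx => ?_⟩
  rw [Fin.sum_univ_eq_sum_range
      (fun i => sqOuterWeight n h i * max (sqInnerWeight n i * x + sqBias n h i) 0),
    sum_range_sqNetwork_eq n h (by omega) hh.le, ← sq_abs x]
  exact (abs_reluKnotSum_sub_sq_le hh (abs_nonneg x) (hnh ▸ abs_le.mpr hx)).trans (by linarith)
end

section
/- Let n ≥ 1, let X₁,…,X_n ∈ R^d with sup_ℓ ‖X_ℓ‖ ≤ B, and let w = (w₁,…,w_n), ŵ = (ŵ₁,…,ŵ_n) be two strictly positive weight vectors. Define μ = Σ_ℓ w_ℓ X_ℓ / Σ_ℓ w_ℓ and μ̂ = Σ_ℓ ŵ_ℓ X_ℓ / Σ_ℓ ŵ_ℓ. Then ‖μ̂ − μ‖ ≤ n·B·(exp(2·max_ℓ |log ŵ_ℓ − log w_ℓ|) − 1). -/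
open scoped BigOperators

/-- Stability of weighted means under multiplicative weight perturbations:
`‖μ̂ − μ‖ ≤ n B (exp (2 max_ℓ |log ŵ_ℓ − log w_ℓ|) − 1)`. -/
theorem weighted_mean_perturbation {n d : ℕ} (hn : 0 < n) (B : ℝ)
    (X : Fin n → EuclideanSpace ℝ (Fin d)) (hB : ∀ ℓ, ‖X ℓ‖ ≤ B)
    (w w' : Fin n → ℝ) (hw : ∀ ℓ, 0 < w ℓ) (hw' : ∀ ℓ, 0 < w' ℓ) :
    ‖(∑ ℓ, w' ℓ)⁻¹ • ∑ ℓ, w' ℓ • X ℓ - (∑ ℓ, w ℓ)⁻¹ • ∑ ℓ, w ℓ • X ℓ‖ ≤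
      (n : ℝ) * B *
        (Real.exp (2 * ⨆ ℓ, |Real.log (w' ℓ) - Real.log (w ℓ)|) - 1) := by
  have hnempty : Nonempty (Fin n) := ⟨⟨0, hn⟩⟩
  set ε := ⨆ ℓ, |Real.log (w' ℓ) - Real.log (w ℓ)| with hεdef
  have hbdd : BddAbove (Set.range fun ℓ => |Real.log (w' ℓ) - Real.log (w ℓ)|) :=
    Set.Finite.bddAbove (Set.finite_range _)
  have hεle : ∀ ℓ, |Real.log (w' ℓ) - Real.log (w ℓ)| ≤ ε := fun ℓ => le_ciSup hbdd ℓ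
  have hε0 : 0 ≤ ε := le_trans (abs_nonneg _) (hεle (Classical.arbitrary _))
  have hS : 0 < ∑ ℓ, w ℓ :=
    Finset.sum_pos (fun ℓ _ => hw ℓ) ⟨Classical.arbitrary _, Finset.mem_univ _⟩
  have hS' : 0 < ∑ ℓ, w' ℓ :=
    Finset.sum_pos (fun ℓ _ => hw' ℓ) ⟨Classical.arbitrary _, Finset.mem_univ _⟩
  have hB0 : 0 ≤ B := le_trans (norm_nonneg _) (hB (Classical.arbitrary _))
  have hr1 : ∀ ℓ, w' ℓ ≤ Real.exp ε * w ℓ := by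
    intro ℓ
    have h1 : Real.log (w' ℓ) ≤ ε + Real.log (w ℓ) := by
      have := (abs_le.mp (hεle ℓ)).2; linarith
    calc w' ℓ = Real.exp (Real.log (w' ℓ)) := (Real.exp_log (hw' ℓ)).symm
      _ ≤ Real.exp (ε + Real.log (w ℓ)) := Real.exp_le_exp.mpr h1
      _ = Real.exp ε * w ℓ := by rw [Real.exp_add, Real.exp_log (hw ℓ)]
  have hr2 : ∀ ℓ, w ℓ ≤ Real.exp ε * w' ℓ := by
    intro ℓ
    have h1 : Real.log (w ℓ) ≤ ε + Real.log (w' ℓ) := by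
      have := (abs_le.mp (hεle ℓ)).1; linarith
    calc w ℓ = Real.exp (Real.log (w ℓ)) := (Real.exp_log (hw ℓ)).symm
      _ ≤ Real.exp (ε + Real.log (w' ℓ)) := Real.exp_le_exp.mpr h1
      _ = Real.exp ε * w' ℓ := by rw [Real.exp_add, Real.exp_log (hw' ℓ)]
  have hexp1 : (1:ℝ) ≤ Real.exp ε := Real.one_le_exp hε0
  have hSle : ∑ ℓ, w' ℓ ≤ Real.exp ε * ∑ ℓ, w ℓ := by
    rw [Finset.mul_sum]; exact Finset.sum_le_sum fun ℓ _ => hr1 ℓ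
  have hSle' : ∑ ℓ, w ℓ ≤ Real.exp ε * ∑ ℓ, w' ℓ := by
    rw [Finset.mul_sum]; exact Finset.sum_le_sum fun ℓ _ => hr2 ℓ
  have hcoef : ∀ ℓ, |(∑ ℓ, w' ℓ)⁻¹ * w' ℓ - (∑ ℓ, w ℓ)⁻¹ * w ℓ| ≤
      Real.exp (2 * ε) - 1 := by
    intro ℓ
    have hp1 : w ℓ / (∑ ℓ, w ℓ) ≤ 1 := by
      rw [div_le_one hS]
      exact Finset.single_le_sum (fun j _ => (hw j).le) (Finset.mem_univ ℓ)
    have hp1' : w' ℓ / (∑ ℓ, w' ℓ) ≤ 1 := by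
      rw [div_le_one hS']
      exact Finset.single_le_sum (fun j _ => (hw' j).le) (Finset.mem_univ ℓ)
    have hinv : (∑ ℓ, w' ℓ)⁻¹ ≤ Real.exp ε * (∑ ℓ, w ℓ)⁻¹ := by
      rw [← div_eq_mul_inv, le_div_iff₀ hS, inv_mul_eq_div, div_le_iff₀ hS']
      linarith
    have hinv' : (∑ ℓ, w ℓ)⁻¹ ≤ Real.exp ε * (∑ ℓ, w' ℓ)⁻¹ := by
      rw [← div_eq_mul_inv, le_div_iff₀ hS', inv_mul_eq_div, div_le_iff₀ hS]
      linarith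
    have hub : (∑ ℓ, w' ℓ)⁻¹ * w' ℓ ≤ Real.exp (2*ε) * ((∑ ℓ, w ℓ)⁻¹ * w ℓ) := by
      calc (∑ ℓ, w' ℓ)⁻¹ * w' ℓ ≤ (Real.exp ε * (∑ ℓ, w ℓ)⁻¹) * (Real.exp ε * w ℓ) := by
            exact mul_le_mul hinv (hr1 ℓ) (hw' ℓ).le
              (mul_nonneg (Real.exp_pos _).le (inv_nonneg.mpr hS.le))
        _ = Real.exp (2*ε) * ((∑ ℓ, w ℓ)⁻¹ * w ℓ) := by
            rw [two_mul, Real.exp_add]; ring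
    have hlb : (∑ ℓ, w ℓ)⁻¹ * w ℓ ≤ Real.exp (2*ε) * ((∑ ℓ, w' ℓ)⁻¹ * w' ℓ) := by
      calc (∑ ℓ, w ℓ)⁻¹ * w ℓ ≤ (Real.exp ε * (∑ ℓ, w' ℓ)⁻¹) * (Real.exp ε * w' ℓ) := by
            exact mul_le_mul hinv' (hr2 ℓ) (hw ℓ).le
              (mul_nonneg (Real.exp_pos _).le (inv_nonneg.mpr hS'.le))
        _ = Real.exp (2*ε) * ((∑ ℓ, w' ℓ)⁻¹ * w' ℓ) := by
            rw [two_mul, Real.exp_add]; ring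
    have hp0 : 0 ≤ (∑ ℓ, w ℓ)⁻¹ * w ℓ := mul_nonneg (inv_nonneg.mpr hS.le) (hw ℓ).le
    have hp0' : 0 ≤ (∑ ℓ, w' ℓ)⁻¹ * w' ℓ := mul_nonneg (inv_nonneg.mpr hS'.le) (hw' ℓ).le
    have h1le : (∑ ℓ, w ℓ)⁻¹ * w ℓ ≤ 1 := by rw [inv_mul_eq_div]; exact hp1
    have h1le' : (∑ ℓ, w' ℓ)⁻¹ * w' ℓ ≤ 1 := by rw [inv_mul_eq_div]; exact hp1'
    have hexp2 : (1:ℝ) ≤ Real.exp (2*ε) := Real.one_le_exp (by linarith)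
    rw [abs_le]
    constructor
    · nlinarith
    · nlinarith
  calc ‖(∑ ℓ, w' ℓ)⁻¹ • ∑ ℓ, w' ℓ • X ℓ - (∑ ℓ, w ℓ)⁻¹ • ∑ ℓ, w ℓ • X ℓ‖
      = ‖∑ ℓ, ((∑ ℓ, w' ℓ)⁻¹ * w' ℓ - (∑ ℓ, w ℓ)⁻¹ * w ℓ) • X ℓ‖ := by
        rw [Finset.smul_sum, Finset.smul_sum, ← Finset.sum_sub_distrib]
        congr 1
        refine Finset.sum_congr rfl fun ℓ _ => ?_
        rw [sub_smul, smul_smul, smul_smul]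
    _ ≤ ∑ ℓ, ‖((∑ ℓ, w' ℓ)⁻¹ * w' ℓ - (∑ ℓ, w ℓ)⁻¹ * w ℓ) • X ℓ‖ := norm_sum_le _ _
    _ ≤ ∑ _ℓ : Fin n, (Real.exp (2 * ε) - 1) * B := by
        refine Finset.sum_le_sum fun ℓ _ => ?_
        rw [norm_smul, Real.norm_eq_abs]
        exact mul_le_mul (hcoef ℓ) (hB ℓ) (norm_nonneg _)
          (by have := Real.one_le_exp (by linarith : (0:ℝ) ≤ 2*ε); linarith)
    _ = (n : ℝ) * B * (Real.exp (2 * ε) - 1) := by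
        rw [Finset.sum_const, Finset.card_univ, Fintype.card_fin, nsmul_eq_mul]; ring
end
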